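/- arXiv:1311.6859 — 6 statements merged into one kernel-verified Lean document; each statement's English description precedes it below -/
import Mathlib

section
/- Let n ≥ 1 and let g, G : ℝⁿ × ℝⁿ → ℂ be measurable functions with A := ess sup_{ξ∈ℝⁿ} ( ∫_{ℝⁿ} |g(η,ξ)|² dη )^{1/2} < ∞ and B := ess sup_{η∈ℝⁿ} ( ∫_{ℝⁿ} |G(η,ξ)|² dξ )^{1/2} < ∞. Then for every u ∈ L²(ℝⁿ;ℂ), the integral (Tu)(η) := ∫_{ℝⁿ} G(η,ξ) g(η−ξ,ξ) u(ξ) dξ converges absolutely for almost every η ∈ ℝⁿ, the resulting function Tu belongs to L²(ℝⁿ), and ‖Tu‖_{L²} ≤ A · B · ‖u‖_{L²}. -/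
/-!
Write `Tu(η) = ∫ G(η,ξ) · (g(η-ξ,ξ) u(ξ)) dξ`. Cauchy–Schwarz in `ξ` bounds `|Tu(η)|²` by
`B² ∫ |g(η-ξ,ξ)|² |u(ξ)|² dξ`; integrating in `η`, Tonelli and translation invariance of Lebesgue
measure turn the right-hand side into `B² ∫ (∫ |g(η,ξ)|² dη) |u(ξ)|² dξ ≤ A² B² ‖u‖²`. Running
this argument for `∫ |G g u| dξ` also gives absolute convergence for a.e. `η`.
-/

open MeasureTheory
open scoped ENNReal

noncomputable section

/-- Euclidean space `ℝⁿ`. -/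
abbrev Euc (n : ℕ) := EuclideanSpace ℝ (Fin n)

theorem ENNReal.sq_lintegral_mul_le {α : Type*} [MeasurableSpace α] {μ : Measure α}
    {f h : α → ℝ≥0∞} (hf : AEMeasurable f μ) (hh : AEMeasurable h μ) :
    (∫⁻ x, f x * h x ∂μ) ^ 2 ≤ (∫⁻ x, f x ^ 2 ∂μ) * ∫⁻ x, h x ^ 2 ∂μ := by
  have hCS := ENNReal.lintegral_mul_le_Lp_mul_Lq μ Real.HolderConjugate.two_two hf hh
  simp only [Pi.mul_apply, ENNReal.rpow_two] at hCS
  calc (∫⁻ x, f x * h x ∂μ) ^ 2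
      ≤ ((∫⁻ x, f x ^ 2 ∂μ) ^ (1 / 2 : ℝ) * (∫⁻ x, h x ^ 2 ∂μ) ^ (1 / 2 : ℝ)) ^ 2 := by gcongr
    _ = (∫⁻ x, f x ^ 2 ∂μ) * ∫⁻ x, h x ^ 2 ∂μ := by
      rw [mul_pow, ← ENNReal.rpow_two, ← ENNReal.rpow_two, ← ENNReal.rpow_mul, ← ENNReal.rpow_mul]
      norm_num

lemma eLpNorm_two_sq {α F : Type*} [MeasurableSpace α] {μ : Measure α} [ENorm F] (f : α → F) :
    eLpNorm f 2 μ ^ 2 = ∫⁻ x, ‖f x‖ₑ ^ 2 ∂μ := by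
  simpa using eLpNorm_nnreal_pow_eq_lintegral (f := f) (μ := μ) (p := 2) two_ne_zero

section SchurTest

variable {E : Type*} [MeasurableSpace E] [AddGroup E] [MeasurableAdd E] [MeasurableSub₂ E]
  {μ : Measure E} [SFinite μ] [μ.IsAddRightInvariant]

theorem lintegral_lintegral_sub_mul_le {k : E → E → ℝ≥0∞} (hk : Measurable (Function.uncurry k))
    {v : E → ℝ≥0∞} (hv : AEMeasurable v μ) {a : ℝ≥0∞} (ha : ∀ᵐ ξ ∂μ, ∫⁻ η, k η ξ ∂μ ≤ a) :
    ∫⁻ η, ∫⁻ ξ, k (η - ξ) ξ * v ξ ∂μ ∂μ ≤ a * ∫⁻ ξ, v ξ ∂μ := by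
  have hk_sub : Measurable fun p : E × E => k (p.1 - p.2) p.2 :=
    hk.comp (measurable_sub.prodMk measurable_snd)
  have hkv : AEMeasurable (Function.uncurry fun η ξ => k (η - ξ) ξ * v ξ) (μ.prod μ) :=
    hk_sub.aemeasurable.mul
      (hv.comp_quasiMeasurePreserving Measure.quasiMeasurePreserving_snd)
  rw [lintegral_lintegral_swap hkv, ← lintegral_const_mul'' a hv]
  refine lintegral_mono_ae ?_
  filter_upwards [ha] with ξ hξ
  rw [lintegral_mul_const (f := fun η => k (η - ξ) ξ) _
    (hk_sub.comp measurable_prodMk_right), lintegral_sub_right_eq_self (k · ξ) ξ]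
  gcongr

theorem lintegral_sq_lintegral_mul_sub_mul_le {K k : E → E → ℝ≥0∞} {v : E → ℝ≥0∞}
    (hK : ∀ η, AEMeasurable (K η) μ) (hk : Measurable (Function.uncurry k))
    (hv : AEMeasurable v μ) {a b : ℝ≥0∞} (hb : ∀ᵐ η ∂μ, ∫⁻ ξ, K η ξ ^ 2 ∂μ ≤ b)
    (ha : ∀ᵐ ξ ∂μ, ∫⁻ η, k η ξ ^ 2 ∂μ ≤ a) :
    ∫⁻ η, (∫⁻ ξ, K η ξ * k (η - ξ) ξ * v ξ ∂μ) ^ 2 ∂μ ≤ b * a * ∫⁻ ξ, v ξ ^ 2 ∂μ := by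
  have hk_sub : Measurable fun p : E × E => k (p.1 - p.2) p.2 :=
    hk.comp (measurable_sub.prodMk measurable_snd)
  have hkv : AEMeasurable (fun p : E × E => k (p.1 - p.2) p.2 * v p.2) (μ.prod μ) :=
    hk_sub.aemeasurable.mul (hv.comp_quasiMeasurePreserving Measure.quasiMeasurePreserving_snd)
  have hCS : ∀ᵐ η ∂μ, (∫⁻ ξ, K η ξ * k (η - ξ) ξ * v ξ ∂μ) ^ 2 ≤
      b * ∫⁻ ξ, k (η - ξ) ξ ^ 2 * v ξ ^ 2 ∂μ := by
    filter_upwards [hb] with η hη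
    simp_rw [mul_assoc, ← mul_pow]
    have hkvη : AEMeasurable (fun ξ => k (η - ξ) ξ * v ξ) μ :=
      (hk_sub.comp measurable_prodMk_left).aemeasurable.mul hv
    exact (ENNReal.sq_lintegral_mul_le (hK η) hkvη).trans (by gcongr)
  calc ∫⁻ η, (∫⁻ ξ, K η ξ * k (η - ξ) ξ * v ξ ∂μ) ^ 2 ∂μ
      ≤ ∫⁻ η, b * ∫⁻ ξ, k (η - ξ) ξ ^ 2 * v ξ ^ 2 ∂μ ∂μ := lintegral_mono_ae hCS
    _ = b * ∫⁻ η, ∫⁻ ξ, k (η - ξ) ξ ^ 2 * v ξ ^ 2 ∂μ ∂μ := by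
      refine lintegral_const_mul'' b ?_
      simp_rw [← mul_pow]
      exact (hkv.pow_const 2).lintegral_prod_right'
    _ ≤ b * (a * ∫⁻ ξ, v ξ ^ 2 ∂μ) := by
      gcongr
      exact lintegral_lintegral_sub_mul_le (hk.pow_const 2) (hv.pow_const 2) ha
    _ = b * a * ∫⁻ ξ, v ξ ^ 2 ∂μ := (mul_assoc _ _ _).symm

end SchurTest

theorem memLp_two_integral_of_lintegral_sq_le {α β F : Type*} [MeasurableSpace α]
    [MeasurableSpace β] {μ : Measure α} {ν : Measure β} [SFinite ν] [NormedAddCommGroup F]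
    [NormedSpace ℝ F] {f : α → β → F} (hf : AEStronglyMeasurable (Function.uncurry f) (μ.prod ν))
    {c : ℝ≥0∞} (hc : c ≠ ∞) (h : ∫⁻ x, (∫⁻ y, ‖f x y‖ₑ ∂ν) ^ 2 ∂μ ≤ c ^ 2) :
    (∀ᵐ x ∂μ, Integrable (f x) ν) ∧ MemLp (fun x => ∫ y, f x y ∂ν) 2 μ ∧
      eLpNorm (fun x => ∫ y, f x y ∂ν) 2 μ ≤ c := by
  have hF : AEMeasurable (fun x => ∫⁻ y, ‖f x y‖ₑ ∂ν) μ := hf.enorm.lintegral_prod_right'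
  have hbound : eLpNorm (fun x => ∫ y, f x y ∂ν) 2 μ ≤ c :=
    calc eLpNorm (fun x => ∫ y, f x y ∂ν) 2 μ
        ≤ eLpNorm (fun x => ∫⁻ y, ‖f x y‖ₑ ∂ν) 2 μ :=
          eLpNorm_mono_enorm fun x => enorm_integral_le_lintegral_enorm _
      _ ≤ c := by
          rw [← ENNReal.pow_le_pow_left_iff two_ne_zero, eLpNorm_two_sq]
          simpa only [enorm_eq_self] using h
  have hfinite : ∀ᵐ x ∂μ, (∫⁻ y, ‖f x y‖ₑ ∂ν) ^ 2 < ∞ :=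
    ae_lt_top' (hF.pow_const 2) (h.trans_lt (ENNReal.pow_lt_top hc.lt_top)).ne
  refine ⟨?_, ⟨hf.integral_prod_right', hbound.trans_lt hc.lt_top⟩, hbound⟩
  filter_upwards [hf.prodMk_left, hfinite] with x hfx hx
  exact ⟨hfx, (ENNReal.pow_lt_top_iff.mp hx).resolve_right two_ne_zero⟩

theorem schur_type_estimate_general (n : ℕ)
    (g G : Euc n → Euc n → ℂ)
    (hg : Measurable (Function.uncurry g)) (hG : Measurable (Function.uncurry G))
    (A B : ℝ) (hA0 : 0 ≤ A) (hB0 : 0 ≤ B)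
    (hA : ∀ᵐ ξ : Euc n, (∫⁻ η : Euc n, (‖g η ξ‖₊ : ℝ≥0∞) ^ 2) ≤ ENNReal.ofReal (A ^ 2))
    (hB : ∀ᵐ η : Euc n, (∫⁻ ξ : Euc n, (‖G η ξ‖₊ : ℝ≥0∞) ^ 2) ≤ ENNReal.ofReal (B ^ 2))
    (u : Euc n → ℂ) (hu : MemLp u 2 volume) :
    (∀ᵐ η : Euc n, Integrable (fun ξ => G η ξ * g (η - ξ) ξ * u ξ)) ∧
    MemLp (fun η => ∫ ξ, G η ξ * g (η - ξ) ξ * u ξ) 2 volume ∧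
    eLpNorm (fun η => ∫ ξ, G η ξ * g (η - ξ) ξ * u ξ) 2 volume ≤
      ENNReal.ofReal (A * B) * eLpNorm u 2 volume := by
  have hK : AEStronglyMeasurable
      (fun p : Euc n × Euc n => G p.1 p.2 * g (p.1 - p.2) p.2 * u p.2) (volume.prod volume) :=
    (hG.aestronglyMeasurable.mul
      (hg.comp (measurable_sub.prodMk measurable_snd)).aestronglyMeasurable).mul hu.1.comp_snd
  refine memLp_two_integral_of_lintegral_sq_le hK
    (ENNReal.mul_ne_top ENNReal.ofReal_ne_top hu.2.ne) ?_
  calc ∫⁻ η, (∫⁻ ξ, ‖G η ξ * g (η - ξ) ξ * u ξ‖ₑ) ^ 2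
      = ∫⁻ η, (∫⁻ ξ, ‖G η ξ‖ₑ * ‖g (η - ξ) ξ‖ₑ * ‖u ξ‖ₑ) ^ 2 := by simp only [enorm_mul]
    _ ≤ ENNReal.ofReal (B ^ 2) * ENNReal.ofReal (A ^ 2) * ∫⁻ ξ, ‖u ξ‖ₑ ^ 2 :=
      lintegral_sq_lintegral_mul_sub_mul_le (k := fun η ξ => ‖g η ξ‖ₑ)
        (fun η => (hG.comp measurable_prodMk_left).enorm.aemeasurable) hg.enorm hu.1.enorm hB hA
    _ = (ENNReal.ofReal (A * B) * eLpNorm u 2 volume) ^ 2 := by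
      rw [mul_pow, eLpNorm_two_sq, ENNReal.ofReal_pow hA0, ENNReal.ofReal_pow hB0,
        ENNReal.ofReal_mul hA0]
      ring

/-- **Schur-type boundedness criterion** (Lemma 3.6 of the paper, following Beals–Reed).
Let `g, G : ℝⁿ × ℝⁿ → ℂ` be measurable with
`A = ess sup_ξ ‖g(·,ξ)‖_{L²} < ∞` and `B = ess sup_η ‖G(η,·)‖_{L²} < ∞` (expressed here by
the a.e. bounds `∫ |g(η,ξ)|² dη ≤ A²` and `∫ |G(η,ξ)|² dξ ≤ B²`).  Then for every
`u ∈ L²(ℝⁿ)` the integral `(Tu)(η) = ∫ G(η,ξ) g(η−ξ,ξ) u(ξ) dξ` converges absolutely for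
a.e. `η`, the function `Tu` is in `L²`, and `‖Tu‖_{L²} ≤ A · B · ‖u‖_{L²}`. -/
theorem schur_type_estimate (n : ℕ) (hn : 1 ≤ n)
    (g G : Euc n → Euc n → ℂ)
    (hg : Measurable (Function.uncurry g)) (hG : Measurable (Function.uncurry G))
    (A B : ℝ) (hA0 : 0 ≤ A) (hB0 : 0 ≤ B)
    (hA : ∀ᵐ ξ : Euc n, (∫⁻ η : Euc n, (‖g η ξ‖₊ : ℝ≥0∞) ^ 2) ≤ ENNReal.ofReal (A ^ 2))
    (hB : ∀ᵐ η : Euc n, (∫⁻ ξ : Euc n, (‖G η ξ‖₊ : ℝ≥0∞) ^ 2) ≤ ENNReal.ofReal (B ^ 2))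
    (u : Euc n → ℂ) (hu : MemLp u 2 volume) :
    (∀ᵐ η : Euc n, Integrable (fun ξ => G η ξ * g (η - ξ) ξ * u ξ)) ∧
    MemLp (fun η => ∫ ξ, G η ξ * g (η - ξ) ξ * u ξ) 2 volume ∧
    eLpNorm (fun η => ∫ ξ, G η ξ * g (η - ξ) ξ * u ξ) 2 volume ≤
      ENNReal.ofReal (A * B) * eLpNorm u 2 volume :=
  schur_type_estimate_general n g G hg hG A B hA0 hB0 hA hB u hu
end
end

section
/- Let n ≥ 1 and let s, r ∈ ℝ satisfy s ≥ r and s > n/2 + max(−r, 0). Then there exists a constant C < ∞ such that for every η ∈ ℝⁿ one has ∫_{ℝⁿ} ⟨η⟩^{2r} · ⟨η−ξ⟩^{−2s} · ⟨ξ⟩^{−2r} dξ ≤ C; that is, the kernel G(η,ξ) := ⟨η⟩^r / (⟨η−ξ⟩^s ⟨ξ⟩^r) lies in L^∞_η L²_ξ(ℝⁿ × ℝⁿ). -/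
/-!
Put `m = s - max (-r) 0`, so that `2 m > n` and `ξ ↦ (1 + ‖ξ‖²)^(-m)` is integrable. The kernel is
bounded pointwise by `4^|r| (⟨η - ξ⟩^(-2m) + ⟨ξ⟩^(-2m))`: for `r ≥ 0` because
`⟨η⟩ ≤ 2 max (⟨η - ξ⟩, ⟨ξ⟩)` and `r ≤ s`, for `r < 0` by Peetre's inequality
`⟨ξ⟩ ≤ √2 ⟨η⟩ ⟨η - ξ⟩`. By translation invariance the integral of the bound does not depend on `η`.
-/

open MeasureTheory
open scoped ENNReal

noncomputable section

/-- The Japanese bracket `⟨x⟩ = √(1 + ‖x‖²)`. -/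
noncomputable def jb {n : ℕ} (x : Euc n) : ℝ := Real.sqrt (1 + ‖x‖ ^ 2)

open Module

section WeightInequalities

variable {H A B c r s : ℝ}

lemma rpow_mul_rpow_neg_mul_rpow_neg_le_of_nonneg (hA : 0 < A) (hB : 0 < B) (hH : 0 ≤ H)
    (hc : 0 ≤ c) (hr : 0 ≤ r) (hrs : r ≤ s) (hHAB : H ≤ c * max A B) :
    H ^ r * A ^ (-s) * B ^ (-r) ≤ c ^ r * (A ^ (-s) + B ^ (-s)) := by
  have hHr : H ^ r ≤ c ^ r * max A B ^ r := by
    rw [← Real.mul_rpow hc (hA.le.trans (le_max_left A B))]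
    exact Real.rpow_le_rpow hH hHAB hr
  rcases le_total A B with hAB | hBA
  · rw [max_eq_right hAB] at hHr
    calc H ^ r * A ^ (-s) * B ^ (-r) ≤ c ^ r * B ^ r * A ^ (-s) * B ^ (-r) := by gcongr
      _ = c ^ r * A ^ (-s) := by rw [Real.rpow_neg hB.le]; field_simp
      _ ≤ c ^ r * (A ^ (-s) + B ^ (-s)) := by gcongr; exact le_add_of_nonneg_right (by positivity)
  · rw [max_eq_left hBA] at hHr
    calc H ^ r * A ^ (-s) * B ^ (-r) ≤ c ^ r * A ^ r * A ^ (-s) * B ^ (-r) := by gcongr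
      _ = c ^ r * A ^ (r - s) * B ^ (-r) := by rw [sub_eq_add_neg, Real.rpow_add hA]; ring
      _ ≤ c ^ r * B ^ (r - s) * B ^ (-r) := by
          gcongr c ^ r * ?_ * _
          exact Real.rpow_le_rpow_of_nonpos hB hBA (by linarith)
      _ = c ^ r * B ^ (-s) := by rw [mul_assoc, ← Real.rpow_add hB]; ring_nf
      _ ≤ c ^ r * (A ^ (-s) + B ^ (-s)) := by gcongr; exact le_add_of_nonneg_left (by positivity)

lemma rpow_mul_rpow_neg_mul_rpow_neg_le_of_nonpos (hA : 0 < A) (hB : 0 ≤ B) (hH : 0 < H)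
    (hc : 0 ≤ c) (hr : r ≤ 0) (hBHA : B ≤ c * H * A) :
    H ^ r * A ^ (-s) * B ^ (-r) ≤ c ^ (-r) * A ^ (-(s + r)) := by
  calc H ^ r * A ^ (-s) * B ^ (-r) ≤ H ^ r * A ^ (-s) * (c * H * A) ^ (-r) := by
        gcongr; linarith
    _ = c ^ (-r) * (H ^ r * H ^ (-r)) * (A ^ (-s) * A ^ (-r)) := by
        rw [Real.mul_rpow (by positivity) hA.le, Real.mul_rpow hc hH.le]; ring
    _ = c ^ (-r) * A ^ (-(s + r)) := by
        rw [← Real.rpow_add hH, ← Real.rpow_add hA, add_neg_cancel, Real.rpow_zero, neg_add]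
        ring

end WeightInequalities

section JapaneseBracket

variable {E : Type*} [SeminormedAddCommGroup E]

lemma one_add_norm_add_sq_le_four_mul_max (x y : E) :
    1 + ‖x + y‖ ^ 2 ≤ 4 * max (1 + ‖x‖ ^ 2) (1 + ‖y‖ ^ 2) := by
  nlinarith [norm_add_le x y, le_max_left (1 + ‖x‖ ^ 2) (1 + ‖y‖ ^ 2), le_max_right (1 + ‖x‖ ^ 2) (1 + ‖y‖ ^ 2),
    norm_nonneg (x + y), sq_nonneg (‖x‖ - ‖y‖)]

lemma one_add_norm_sub_sq_le (x y : E) :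
    1 + ‖x - y‖ ^ 2 ≤ 2 * (1 + ‖x‖ ^ 2) * (1 + ‖y‖ ^ 2) := by
  nlinarith [norm_sub_le x y, norm_nonneg (x - y), sq_nonneg (‖x‖ - ‖y‖), sq_nonneg (‖x‖ * ‖y‖)]

lemma kernel_weight_le {r s : ℝ} (hrs : r ≤ s) (η ξ : E) :
    (1 + ‖η‖ ^ 2) ^ r * (1 + ‖η - ξ‖ ^ 2) ^ (-s) * (1 + ‖ξ‖ ^ 2) ^ (-r) ≤
      4 ^ |r| * ((1 + ‖η - ξ‖ ^ 2) ^ (-(s - max (-r) 0)) +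
        (1 + ‖ξ‖ ^ 2) ^ (-(s - max (-r) 0))) := by
  rcases le_total 0 r with hr | hr
  · rw [abs_of_nonneg hr, max_eq_right (neg_nonpos.2 hr), sub_zero]
    refine rpow_mul_rpow_neg_mul_rpow_neg_le_of_nonneg (by positivity) (by positivity)
      (by positivity) (by norm_num) hr hrs ?_
    simpa only [sub_add_cancel] using one_add_norm_add_sq_le_four_mul_max (η - ξ) ξ
  · rw [abs_of_nonpos hr, max_eq_left (neg_nonneg.2 hr), sub_neg_eq_add]
    have hpeetre : 1 + ‖ξ‖ ^ 2 ≤ 4 * (1 + ‖η‖ ^ 2) * (1 + ‖η - ξ‖ ^ 2) := by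
      calc 1 + ‖ξ‖ ^ 2 ≤ 2 * (1 + ‖η‖ ^ 2) * (1 + ‖η - ξ‖ ^ 2) := by
            simpa only [sub_sub_cancel] using one_add_norm_sub_sq_le η (η - ξ)
        _ ≤ 4 * (1 + ‖η‖ ^ 2) * (1 + ‖η - ξ‖ ^ 2) := by gcongr; norm_num
    refine (rpow_mul_rpow_neg_mul_rpow_neg_le_of_nonpos (by positivity) (by positivity)
      (by positivity) (by norm_num) hr hpeetre).trans ?_
    gcongr
    exact le_add_of_nonneg_right (by positivity)

end JapaneseBracket

theorem exists_lintegral_kernel_weight_le {E : Type*} [NormedAddCommGroup E] [NormedSpace ℝ E]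
    [FiniteDimensional ℝ E] [MeasurableSpace E] [BorelSpace E] (μ : Measure E)
    [μ.IsAddHaarMeasure] {r s : ℝ} (hrs : r ≤ s) (hs : (finrank ℝ E : ℝ) / 2 + max (-r) 0 < s) :
    ∃ C : ℝ, ∀ η : E,
      ∫⁻ ξ, ENNReal.ofReal
        ((1 + ‖η‖ ^ 2) ^ r * (1 + ‖η - ξ‖ ^ 2) ^ (-s) * (1 + ‖ξ‖ ^ 2) ^ (-r)) ∂μ ≤
        ENNReal.ofReal C := by
  set m := s - max (-r) 0
  set g : E → ℝ := fun x ↦ (1 + ‖x‖ ^ 2) ^ (-m)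
  have hg : Integrable g μ := by
    have := integrable_rpow_neg_one_add_norm_sq (μ := μ) (r := 2 * m) (by linarith)
    simpa only [neg_div, mul_div_cancel_left₀ m (two_ne_zero (α := ℝ))] using this
  refine ⟨4 ^ |r| * (2 * ∫ x, g x ∂μ), fun η ↦ ?_⟩
  have hbound : Integrable (fun ξ ↦ 4 ^ |r| * (g (η - ξ) + g ξ)) μ :=
    ((hg.comp_sub_left η).add hg).const_mul _
  calc ∫⁻ ξ, ENNReal.ofReal
        ((1 + ‖η‖ ^ 2) ^ r * (1 + ‖η - ξ‖ ^ 2) ^ (-s) * (1 + ‖ξ‖ ^ 2) ^ (-r)) ∂μ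
      ≤ ∫⁻ ξ, ENNReal.ofReal (4 ^ |r| * (g (η - ξ) + g ξ)) ∂μ :=
        lintegral_mono fun ξ ↦ ENNReal.ofReal_le_ofReal (kernel_weight_le hrs η ξ)
    _ = ENNReal.ofReal (∫ ξ, 4 ^ |r| * (g (η - ξ) + g ξ) ∂μ) :=
        (ofReal_integral_eq_lintegral_ofReal hbound (ae_of_all _ fun ξ ↦ by positivity)).symm
    _ = ENNReal.ofReal (4 ^ |r| * (2 * ∫ x, g x ∂μ)) := by
        rw [integral_const_mul, integral_add (hg.comp_sub_left η) hg,
          integral_sub_left_eq_self g μ η, two_mul]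

lemma jb_rpow_two_mul {n : ℕ} (x : Euc n) (t : ℝ) : jb x ^ (2 * t) = (1 + ‖x‖ ^ 2) ^ t := by
  rw [jb, Real.sqrt_eq_rpow, ← Real.rpow_mul (by positivity), one_div,
    inv_mul_cancel_left₀ two_ne_zero]

theorem fraction_estimate_general (n : ℕ) (s r : ℝ)
    (hsr : r ≤ s) (hs : (n : ℝ) / 2 + max (-r) 0 < s) :
    ∃ C : ℝ, ∀ η : Euc n,
      (∫⁻ ξ : Euc n,
        ENNReal.ofReal (jb η ^ (2 * r) * jb (η - ξ) ^ (-(2 * s)) * jb ξ ^ (-(2 * r)))) ≤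
        ENNReal.ofReal C := by
  obtain ⟨C, hC⟩ := exists_lintegral_kernel_weight_le (volume : Measure (Euc n)) hsr
    (by rwa [finrank_euclideanSpace_fin])
  refine ⟨C, fun η ↦ ?_⟩
  simp only [← mul_neg, jb_rpow_two_mul]
  exact hC η

/-- **Weighted kernel estimate** (Lemma 3.7 of the paper).  If `s ≥ r` and
`s > n/2 + max(−r,0)`, then there is `C < ∞` such that for every `η ∈ ℝⁿ`
`∫ ⟨η⟩^{2r} ⟨η−ξ⟩^{−2s} ⟨ξ⟩^{−2r} dξ ≤ C`; i.e. the kernel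
`G(η,ξ) = ⟨η⟩^r / (⟨η−ξ⟩^s ⟨ξ⟩^r)` lies in `L^∞_η L²_ξ`. -/
theorem fraction_estimate (n : ℕ) (hn : 1 ≤ n) (s r : ℝ)
    (hsr : r ≤ s) (hs : (n : ℝ) / 2 + max (-r) 0 < s) :
    ∃ C : ℝ, ∀ η : Euc n,
      (∫⁻ ξ : Euc n,
        ENNReal.ofReal (jb η ^ (2 * r) * jb (η - ξ) ^ (-(2 * s)) * jb ξ ^ (-(2 * r)))) ≤
        ENNReal.ofReal C :=
  fraction_estimate_general n s r hsr hs
end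
end

section
/- Let d ≥ 1 and let g, g' be symmetric bilinear forms on ℝ^{1+d}, each of signature (1,d); that is, for each of g and g' there is a basis (e₀, e₁, …, e_d) of ℝ^{1+d} in which the form is diagonal with value 1 on e₀ and value −1 on e₁, …, e_d. Suppose that the zero sets of the associated quadratic forms coincide: { x ∈ ℝ^{1+d} : g(x,x) = 0 } = { x ∈ ℝ^{1+d} : g'(x,x) = 0 }. Then there exists μ ∈ ℝ, μ ≠ 0, such that g = μ · g'. -/
/-!
Let `b` be a basis in which `g` is diagonal with entries `1, -1, …, -1`, and let `g'` vanish on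
the light cone of `g`. The null vectors `b₀ ± bᵢ` force `g'(b₀, bᵢ) = 0` and
`g'(bᵢ, bᵢ) = -g'(b₀, b₀)`; the null vector `5 b₀ + 3 bᵢ + 4 bⱼ` (from `3² + 4² = 5²`) then
forces `g'(bᵢ, bⱼ) = 0`. Hence `g' = g'(b₀, b₀) • g`, and the factor is nonzero because `g'`
is not identically zero.
-/

noncomputable section

/-- A symmetric bilinear form on `ℝ^{1+d}` of Lorentzian signature `(1,d)`: there is a
basis in which the form is diagonal with value `1` on the first basis vector and `-1` on
the remaining ones. -/
def IsLorentzSig (d : ℕ)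
    (g : (Fin (d + 1) → ℝ) →ₗ[ℝ] (Fin (d + 1) → ℝ) →ₗ[ℝ] ℝ) : Prop :=
  (∀ x y, g x y = g y x) ∧
  ∃ b : Module.Basis (Fin (d + 1)) ℝ (Fin (d + 1) → ℝ),
    (∀ i j, i ≠ j → g (b i) (b j) = 0) ∧
    g (b 0) (b 0) = 1 ∧
    ∀ i, i ≠ 0 → g (b i) (b i) = -1

namespace LinearMap.BilinForm

variable {K V ι : Type*} [Field K] [AddCommGroup V] [Module K V]

structure IsLorentzBasis (g : LinearMap.BilinForm K V) (b : Module.Basis ι K V) (i₀ : ι) :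
    Prop where
  apply_ne : ∀ i j, i ≠ j → g (b i) (b j) = 0
  apply_time : g (b i₀) (b i₀) = 1
  apply_space : ∀ i, i ≠ i₀ → g (b i) (b i) = -1

variable {g g' : LinearMap.BilinForm K V} {b : Module.Basis ι K V} {i₀ : ι}
  (hb : IsLorentzBasis g b i₀) (hg' : ∀ x y, g' x y = g' y x)
  (hnull : ∀ x, g x x = 0 → g' x x = 0)

include hb hnull

theorem apply_self_time_add_smul_space_eq_zero {i : ι} (hi : i ≠ i₀) {s : K} (hs : s * s = 1) :
    g' (b i₀ + s • b i) (b i₀ + s • b i) = 0 := by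
  refine hnull _ ?_
  simp only [map_add, map_smul, LinearMap.add_apply, LinearMap.smul_apply, smul_eq_mul,
    hb.apply_time, hb.apply_space i hi, hb.apply_ne _ _ hi, hb.apply_ne _ _ hi.symm]
  linear_combination -hs

variable [CharZero K]

include hg'

theorem apply_time_space_eq_zero {i : ι} (hi : i ≠ i₀) : g' (b i₀) (b i) = 0 := by
  have hplus := apply_self_time_add_smul_space_eq_zero hb hnull hi (s := 1) (by norm_num)
  have hminus := apply_self_time_add_smul_space_eq_zero hb hnull hi (s := -1) (by norm_num)
  simp only [map_add, map_smul, LinearMap.add_apply, LinearMap.smul_apply, smul_eq_mul,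
    hg' (b i) (b i₀)] at hplus hminus
  linear_combination (hplus - hminus) / 4

theorem apply_space_self_eq_neg {i : ι} (hi : i ≠ i₀) :
    g' (b i) (b i) = -g' (b i₀) (b i₀) := by
  have hplus := apply_self_time_add_smul_space_eq_zero hb hnull hi (s := 1) (by norm_num)
  simp only [map_add, one_smul, LinearMap.add_apply, hg' (b i) (b i₀),
    apply_time_space_eq_zero hb hg' hnull hi] at hplus
  linear_combination hplus

theorem apply_space_space_eq_zero {i j : ι} (hi : i ≠ i₀) (hj : j ≠ i₀) (hij : i ≠ j) :
    g' (b i) (b j) = 0 := by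
  have hnull_vec := hnull ((5 : K) • b i₀ + (3 : K) • b i + (4 : K) • b j) (by
    simp only [map_add, map_smul, LinearMap.add_apply, LinearMap.smul_apply, smul_eq_mul,
      hb.apply_time, hb.apply_space i hi, hb.apply_space j hj, hb.apply_ne _ _ hi,
      hb.apply_ne _ _ hi.symm, hb.apply_ne _ _ hj, hb.apply_ne _ _ hj.symm, hb.apply_ne _ _ hij,
      hb.apply_ne _ _ hij.symm]
    ring)
  simp only [map_add, map_smul, LinearMap.add_apply, LinearMap.smul_apply, smul_eq_mul,
    hg' (b i) (b i₀), hg' (b j) (b i₀), hg' (b j) (b i),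
    apply_time_space_eq_zero hb hg' hnull hi, apply_time_space_eq_zero hb hg' hnull hj,
    apply_space_self_eq_neg hb hg' hnull hi, apply_space_self_eq_neg hb hg' hnull hj] at hnull_vec
  linear_combination hnull_vec / 24

theorem eq_smul_of_null_imp_null : g' = g' (b i₀) (b i₀) • g := by
  refine b.ext fun i => b.ext fun j => ?_
  rw [LinearMap.smul_apply, LinearMap.smul_apply, smul_eq_mul]
  rcases eq_or_ne i j with rfl | hij
  · rcases eq_or_ne i i₀ with rfl | hi
    · rw [hb.apply_time, mul_one]
    · rw [hb.apply_space i hi, apply_space_self_eq_neg hb hg' hnull hi, mul_neg_one]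
  rw [hb.apply_ne i j hij, mul_zero]
  rcases eq_or_ne i i₀ with rfl | hi
  · exact apply_time_space_eq_zero hb hg' hnull hij.symm
  rcases eq_or_ne j i₀ with rfl | hj
  · rw [hg']
    exact apply_time_space_eq_zero hb hg' hnull hi
  exact apply_space_space_eq_zero hb hg' hnull hi hj hij

end LinearMap.BilinForm

theorem same_light_cone_implies_proportional_general (d : ℕ)
    (g g' : (Fin (d + 1) → ℝ) →ₗ[ℝ] (Fin (d + 1) → ℝ) →ₗ[ℝ] ℝ)
    (hg : IsLorentzSig d g) (hg' : IsLorentzSig d g')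
    (hzero : {x | g x x = 0} = {x | g' x x = 0}) :
    ∃ μ : ℝ, μ ≠ 0 ∧ g = μ • g' := by
  obtain ⟨-, b, hb_orth, hb_time, hb_space⟩ := hg
  obtain ⟨hg'_symm, b', -, hb'_time, -⟩ := hg'
  have hprop : g' = g' (b 0) (b 0) • g :=
    LinearMap.BilinForm.eq_smul_of_null_imp_null ⟨hb_orth, hb_time, hb_space⟩ hg'_symm
      fun x hx => hzero.subset hx
  set c := g' (b 0) (b 0)
  have hc : c ≠ 0 := by
    rintro hc
    rw [hprop, hc, zero_smul, LinearMap.zero_apply, LinearMap.zero_apply] at hb'_time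
    exact zero_ne_one hb'_time
  exact ⟨c⁻¹, inv_ne_zero hc, by rw [hprop, smul_smul, inv_mul_cancel₀ hc, one_smul]⟩

/-- **Bilinear forms with the same light cone are proportional** (Lemma 8.6 of the
paper).  Let `d ≥ 1` and let `g, g'` be symmetric bilinear forms on `ℝ^{1+d}`, each of
signature `(1,d)`, whose associated quadratic forms have the same zero set.  Then
`g = μ g'` for some `μ ∈ ℝ`, `μ ≠ 0`. -/
theorem same_light_cone_implies_proportional (d : ℕ) (hd : 1 ≤ d)
    (g g' : (Fin (d + 1) → ℝ) →ₗ[ℝ] (Fin (d + 1) → ℝ) →ₗ[ℝ] ℝ)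
    (hg : IsLorentzSig d g) (hg' : IsLorentzSig d g')
    (hzero : {x | g x x = 0} = {x | g' x x = 0}) :
    ∃ μ : ℝ, μ ≠ 0 ∧ g = μ • g' :=
  same_light_cone_implies_proportional_general d g g' hg hg' hzero
end
end

section
/- Let n ≥ 2. Let Y, ζ ∈ ℝ^{n−1}, σ ∈ ℝ and τ ∈ ℝ with τ ≥ 0, (ζ,σ) ≠ (0,0) and (Y·ζ − σ)² = ‖ζ‖². Then the following are equivalent: (a) 2(Y·ζ−σ)Y − 2ζ = 0 and 2(Y·ζ−σ)τ = 0 and there exists c ∈ ℝ with −2(Y·ζ−σ)ζ = c·ζ and c·σ = 0; (b) τ = 0, σ = 0, ζ ≠ 0, and Y = ζ/‖ζ‖ or Y = −ζ/‖ζ‖. -/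
/-!
Write `k = Y·ζ − σ`. Once `ζ ≠ 0` (forced by `p = 0` and `(ζ, σ) ≠ 0`), the vanishing `∂_Y`-component
says `k • Y = ζ`, so `k ≠ 0`; the fiber condition then pins `c = −2k`, whence `σ = 0`, and the
`∂_τ`-component gives `τ = 0`. What remains is the equation `⟪Y, ζ⟫ • Y = ζ`: pairing it with `ζ`
gives `⟪Y, ζ⟫² = ‖ζ‖²`, so its solutions are exactly `Y = ±ζ/‖ζ‖`.
-/

open scoped RealInnerProductSpace

section

variable {E : Type*} [NormedAddCommGroup E] [InnerProductSpace ℝ E]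

theorem real_inner_inv_norm_smul_self (ζ : E) : ⟪‖ζ‖⁻¹ • ζ, ζ⟫ = ‖ζ‖ := by
  rcases eq_or_ne ζ 0 with rfl | hζ
  · simp
  · rw [real_inner_smul_self_left]
    field_simp [norm_ne_zero_iff.mpr hζ]

theorem real_inner_smul_self_eq_iff {Y ζ : E} (hζ : ζ ≠ 0) :
    ⟪Y, ζ⟫ • Y = ζ ↔ Y = ‖ζ‖⁻¹ • ζ ∨ Y = -(‖ζ‖⁻¹ • ζ) := by
  constructor
  · intro h
    have hk : ⟪Y, ζ⟫ ≠ 0 := left_ne_zero_of_smul (h ▸ hζ)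
    have hsq : ⟪Y, ζ⟫ ^ 2 = ‖ζ‖ ^ 2 :=
      calc ⟪Y, ζ⟫ ^ 2 = ⟪⟪Y, ζ⟫ • Y, ζ⟫ := by rw [real_inner_smul_left, sq]
        _ = ‖ζ‖ ^ 2 := by rw [h, real_inner_self_eq_norm_sq]
    rw [← eq_inv_smul_iff₀ hk] at h
    rcases sq_eq_sq_iff_eq_or_eq_neg.mp hsq with hk' | hk'
    · exact .inl (by rw [h, hk'])
    · exact .inr (by rw [h, hk', inv_neg, neg_smul])
  · rintro (rfl | rfl)
    · rw [real_inner_inv_norm_smul_self, smul_inv_smul₀ (norm_ne_zero_iff.mpr hζ)]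
    · rw [inner_neg_left, real_inner_inv_norm_smul_self, neg_smul_neg,
        smul_inv_smul₀ (norm_ne_zero_iff.mpr hζ)]

end

theorem deSitter_radial_points_general (n : ℕ)
    (Y ζ : EuclideanSpace ℝ (Fin (n - 1))) (σ τ : ℝ)
    (hne : ¬(ζ = 0 ∧ σ = 0))
    (hchar : (⟪Y, ζ⟫ - σ) ^ 2 = ‖ζ‖ ^ 2) :
    ((2 * (⟪Y, ζ⟫ - σ)) • Y - (2 : ℝ) • ζ = 0 ∧
     2 * (⟪Y, ζ⟫ - σ) * τ = 0 ∧
     ∃ c : ℝ, (-(2 * (⟪Y, ζ⟫ - σ))) • ζ = c • ζ ∧ c * σ = 0) ↔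
    (τ = 0 ∧ σ = 0 ∧ ζ ≠ 0 ∧ (Y = ‖ζ‖⁻¹ • ζ ∨ Y = -(‖ζ‖⁻¹ • ζ))) := by
  have hζ : ζ ≠ 0 := by
    rintro rfl
    exact hne ⟨rfl, by simpa using hchar⟩
  have hbase : (2 * (⟪Y, ζ⟫ - σ)) • Y - (2 : ℝ) • ζ = 0 ↔ (⟪Y, ζ⟫ - σ) • Y = ζ := by
    rw [sub_eq_zero, mul_smul, smul_right_inj two_ne_zero]
  rw [hbase, ← real_inner_smul_self_eq_iff hζ]
  constructor
  · rintro ⟨hY, hτ, c, hc, hcσ⟩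
    have h2k : 2 * (⟪Y, ζ⟫ - σ) ≠ 0 := mul_ne_zero two_ne_zero (left_ne_zero_of_smul (hY ▸ hζ))
    have hσ : σ = 0 := by
      rw [← smul_left_injective ℝ hζ hc] at hcσ
      exact (mul_eq_zero.mp hcσ).resolve_left (neg_ne_zero.mpr h2k)
    refine ⟨(mul_eq_zero.mp hτ).resolve_left h2k, hσ, hζ, ?_⟩
    rwa [hσ, sub_zero] at hY
  · rintro ⟨rfl, rfl, -, hY⟩
    exact ⟨by rwa [sub_zero], mul_zero _, _, rfl, mul_zero _⟩

/-- **Radial points of the static de Sitter wave operator** (Lemma 7.2 of the paper).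
In coordinates `(Y, τ) ∈ ℝ^{n−1} × [0,∞)` near future infinity, with b-covectors
`ζ dY + σ dτ/τ`, the b-principal symbol of the wave operator is
`p = (Y·ζ − σ)² − ‖ζ‖²` and its Hamilton vector field has `∂_Y`-component
`2(Y·ζ−σ)Y − 2ζ`, `∂_τ`-component `2(Y·ζ−σ)τ` (up to sign) and fiber components
`(−2(Y·ζ−σ)ζ, 0)`.  For a characteristic point (`p = 0`, `(ζ,σ) ≠ 0`, `τ ≥ 0`), being a
radial point — i.e. the base components of `H_p` vanish and the fiber components are a
multiple `c` of the fiber dilation generator `(ζ, σ)` — is equivalent to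
`τ = 0`, `σ = 0`, `ζ ≠ 0` and `Y = ±ζ/‖ζ‖`. -/
theorem deSitter_radial_points (n : ℕ) (hn : 2 ≤ n)
    (Y ζ : EuclideanSpace ℝ (Fin (n - 1))) (σ τ : ℝ)
    (hτ : 0 ≤ τ) (hne : ¬(ζ = 0 ∧ σ = 0))
    (hchar : (⟪Y, ζ⟫ - σ) ^ 2 = ‖ζ‖ ^ 2) :
    ((2 * (⟪Y, ζ⟫ - σ)) • Y - (2 : ℝ) • ζ = 0 ∧
     2 * (⟪Y, ζ⟫ - σ) * τ = 0 ∧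
     ∃ c : ℝ, (-(2 * (⟪Y, ζ⟫ - σ))) • ζ = c • ζ ∧ c * σ = 0) ↔
    (τ = 0 ∧ σ = 0 ∧ ζ ≠ 0 ∧ (Y = ‖ζ‖⁻¹ • ζ ∨ Y = -(‖ζ‖⁻¹ • ζ))) :=
  deSitter_radial_points_general n Y ζ σ τ hne hchar
end

section
/- Let m ∈ ℝ and let a : ℂ → ℂ be entire. Assume that for every N ∈ ℕ and every k ∈ ℕ there is a constant C_{N,k} such that |a^{(k)}(λ + iμ)| ≤ C_{N,k} (1 + |λ|)^{m − k} for all λ ∈ ℝ and all μ ∈ [−N, N]. Fix k ∈ ℕ with k > m + 1, so that λ ↦ a^{(k)}(λ + iμ) is absolutely integrable on ℝ for each μ. Then: (i) for every μ ∈ ℝ and every x ∈ ℝ, ∫_ℝ e^{ixλ} a^{(k)}(λ) dλ = e^{−xμ} ∫_ℝ e^{ixλ} a^{(k)}(λ + iμ) dλ; (ii) consequently, for every μ ≥ 0, sup_{x ∈ ℝ} e^{μ|x|} | ∫_ℝ e^{ixλ} a^{(k)}(λ) dλ | < ∞. -/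
/-!
For fixed `x`, `F z = e^{ixz} a^{(k)}(z)` is entire, so Cauchy's theorem on the rectangles
`[-R, R] × [0, μ]` relates its integrals over the lines `Im z = 0` and `Im z = μ`; the vertical
sides vanish as `R → ∞` because `a^{(k)}` decays like `(1 + |λ|)^{m-k}` uniformly on the strip.
On `Im z = μ` the factor `e^{ixz}` has modulus `e^{-xμ}`, so shifting to `Im z = ±μ`, with the
sign of `x`, bounds `e^{μ|x|} |∫ e^{ixλ} a^{(k)}(λ) dλ|` by `∫ |a^{(k)}(λ ± iμ)| dλ`.
-/

open MeasureTheory Filter Complex Set Topology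

section ContourShift

variable {E : Type*} [NormedAddCommGroup E] [NormedSpace ℂ E]

theorem tendsto_verticalIntegral_of_norm_le {F : ℂ → E} {g : ℝ → ℝ} {μ : ℝ} {l : Filter ℝ}
    (hg : Tendsto g l (𝓝 0)) (hFg : ∀ R y : ℝ, |y| ≤ |μ| → ‖F (R + y * I)‖ ≤ g R) :
    Tendsto (fun R : ℝ => ∫ y in (0 : ℝ)..μ, F (R + y * I)) l (𝓝 0) := by
  have hbound : ∀ R : ℝ, ‖∫ y in (0 : ℝ)..μ, F (R + y * I)‖ ≤ g R * |μ - 0| := fun R =>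
    intervalIntegral.norm_integral_le_of_norm_le_const fun y hy => hFg R y <| by
      simpa using abs_sub_left_of_mem_uIcc (uIoc_subset_uIcc hy)
  exact squeeze_zero_norm hbound (by simpa using hg.mul_const |μ - 0|)

theorem integral_eq_integral_add_mul_I_of_tendsto_verticalIntegral {F : ℂ → E}
    (hF : Differentiable ℂ F) {μ : ℝ} (h₀ : Integrable fun l : ℝ => F l)
    (hμ : Integrable fun l : ℝ => F (l + μ * I))
    (hvert : Tendsto (fun R : ℝ => ∫ y in (0 : ℝ)..μ, F (R + y * I)) (cocompact ℝ) (𝓝 0)) :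
    ∫ l : ℝ, F l = ∫ l : ℝ, F (l + μ * I) := by
  have hrect : ∀ R : ℝ, (∫ l in -R..R, F l) - ∫ l in -R..R, F (l + μ * I) =
      I • (∫ y in (0 : ℝ)..μ, F (-R + y * I)) - I • ∫ y in (0 : ℝ)..μ, F (R + y * I) := by
    intro R
    have h := integral_boundary_rect_eq_zero_of_differentiableOn F (-R) (R + μ * I)
      hF.differentiableOn
    simp only [neg_re, neg_im, ofReal_re, ofReal_im, add_re, add_im, mul_re, mul_im, I_re, I_im,
      mul_zero, mul_one, sub_zero, zero_add, add_zero, neg_zero, ofReal_zero, zero_mul,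
      ofReal_neg] at h
    rw [← sub_eq_zero, ← h]
    abel
  have hsides : Tendsto (fun R : ℝ => I • (∫ y in (0 : ℝ)..μ, F (-R + y * I)) -
      I • ∫ y in (0 : ℝ)..μ, F (R + y * I)) atTop (𝓝 0) := by
    have hbot := hvert.comp (tendsto_neg_atTop_atBot.mono_right atBot_le_cocompact)
    have htop := hvert.mono_left atTop_le_cocompact
    simpa using (hbot.const_smul I).sub (htop.const_smul I)
  have hlim := (intervalIntegral_tendsto_integral h₀ tendsto_neg_atTop_atBot tendsto_id).sub
    (intervalIntegral_tendsto_integral hμ tendsto_neg_atTop_atBot tendsto_id)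
  rw [← sub_eq_zero]
  exact tendsto_nhds_unique hlim (hsides.congr fun R => (hrect R).symm)

end ContourShift

theorem tendsto_one_add_abs_rpow_cocompact {s : ℝ} (hs : s < 0) :
    Tendsto (fun l : ℝ => (1 + |l|) ^ s) (cocompact ℝ) (𝓝 0) := by
  have h := (tendsto_rpow_neg_atTop (neg_pos.mpr hs)).comp
    (tendsto_atTop_add_const_left _ 1 (tendsto_norm_cocompact_atTop (E := ℝ)))
  simpa [Function.comp_def] using h

theorem integrable_of_norm_le_one_add_abs_rpow {E : Type*} [NormedAddCommGroup E] {g : ℝ → E}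
    {s C : ℝ} (hg : Continuous g) (hs : s < -1) (hbound : ∀ l, ‖g l‖ ≤ C * (1 + |l|) ^ s) :
    Integrable g := by
  have h := integrable_one_add_norm (E := ℝ) (μ := volume) (r := -s) (by simp; linarith)
  simp only [neg_neg, Real.norm_eq_abs] at h
  exact (h.const_mul C).mono' hg.aestronglyMeasurable (.of_forall hbound)

theorem norm_cexp_I_mul_ofReal_mul_ofReal (x l : ℝ) : ‖cexp (I * x * l)‖ = 1 := by
  rw [mul_assoc, ← ofReal_mul, norm_exp_I_mul_ofReal]

theorem cexp_I_mul_ofReal_mul_add_mul_I (x l y : ℝ) :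
    cexp (I * x * (l + y * I)) = Real.exp (-(x * y)) * cexp (I * x * l) := by
  rw [ofReal_exp, ← Complex.exp_add]
  congr 1
  push_cast
  linear_combination (x * y : ℂ) * I_mul_I

theorem integral_cexp_mul_eq_integral_cexp_mul_add_mul_I {f : ℂ → ℂ} (hf : Differentiable ℂ f)
    {s C μ : ℝ} (hs : s < -1)
    (hbound : ∀ l y : ℝ, |y| ≤ |μ| → ‖f (l + y * I)‖ ≤ C * (1 + |l|) ^ s) (x : ℝ) :
    ∫ l : ℝ, cexp (I * x * l) * f l =
      Real.exp (-(x * μ)) * ∫ l : ℝ, cexp (I * x * l) * f (l + μ * I) := by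
  set F : ℂ → ℂ := fun z => cexp (I * x * z) * f z
  have hline : ∀ l y : ℝ, |y| ≤ |μ| →
      ‖F (l + y * I)‖ ≤ Real.exp (|x| * |μ|) * (C * (1 + |l|) ^ s) := by
    intro l y hy
    simp only [F, norm_mul, cexp_I_mul_ofReal_mul_add_mul_I, norm_cexp_I_mul_ofReal_mul_ofReal,
      norm_real, Real.norm_eq_abs, Real.abs_exp, mul_one]
    have hexp : Real.exp (-(x * y)) ≤ Real.exp (|x| * |μ|) := Real.exp_le_exp.mpr <|
      (neg_le_abs _).trans <| (abs_mul x y).trans_le <| by gcongr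
    exact mul_le_mul hexp (hbound l y hy) (norm_nonneg _) (Real.exp_nonneg _)
  have hF : Differentiable ℂ F := by fun_prop
  have hint : ∀ y : ℝ, |y| ≤ |μ| → Integrable fun l : ℝ => F (l + y * I) := fun y hy =>
    integrable_of_norm_le_one_add_abs_rpow (hF.continuous.comp (by fun_prop)) hs
      fun l => (hline l y hy).trans_eq (mul_assoc _ _ _).symm
  have hdecay : Tendsto (fun l : ℝ => Real.exp (|x| * |μ|) * (C * (1 + |l|) ^ s)) (cocompact ℝ)
      (𝓝 0) := by
    simpa using ((tendsto_one_add_abs_rpow_cocompact (by linarith)).const_mul C).const_mul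
      (Real.exp (|x| * |μ|))
  calc ∫ l : ℝ, cexp (I * x * l) * f l = ∫ l : ℝ, F (l + μ * I) :=
        integral_eq_integral_add_mul_I_of_tendsto_verticalIntegral hF
          (by simpa using hint 0 (by simp)) (hint μ le_rfl)
          (tendsto_verticalIntegral_of_norm_le hdecay hline)
    _ = ∫ l : ℝ, (Real.exp (-(x * μ)) : ℂ) * (cexp (I * x * l) * f (l + μ * I)) := by
        simp only [F, cexp_I_mul_ofReal_mul_add_mul_I, ← mul_assoc]
    _ = _ := integral_const_mul _ _

theorem exp_mul_norm_integral_cexp_mul_le {f : ℂ → ℂ} {x ν : ℝ}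
    (hshift : ∫ l : ℝ, cexp (I * x * l) * f l =
      Real.exp (-(x * ν)) * ∫ l : ℝ, cexp (I * x * l) * f (l + ν * I)) :
    Real.exp (x * ν) * ‖∫ l : ℝ, cexp (I * x * l) * f l‖ ≤ ∫ l : ℝ, ‖f (l + ν * I)‖ := by
  rw [hshift, norm_mul, norm_real, Real.norm_eq_abs, Real.abs_exp, ← mul_assoc, ← Real.exp_add,
    add_neg_cancel, Real.exp_zero, one_mul]
  refine (norm_integral_le_integral_norm _).trans_eq ?_
  simp only [norm_mul, norm_cexp_I_mul_ofReal_mul_ofReal, one_mul]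

/-- **Contour shift and super-exponential decay** (the decay direction of Lemma 2.2 of
the paper, in integral form).  Let `a` be entire with, for every `N` and `j`,
`|a^{(j)}(λ+iμ)| ≤ C_{N,j} (1+|λ|)^{m−j}` for `|μ| ≤ N`, and fix `k ∈ ℕ` with
`k > m + 1`.  Then (i) for all `μ, x ∈ ℝ`,
`∫ e^{ixλ} a^{(k)}(λ) dλ = e^{−xμ} ∫ e^{ixλ} a^{(k)}(λ+iμ) dλ`, and consequently
(ii) for every `μ ≥ 0`, `sup_x e^{μ|x|} |∫ e^{ixλ} a^{(k)}(λ) dλ| < ∞`. -/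
theorem entire_symbol_contour_shift (m : ℝ) (a : ℂ → ℂ) (ha : Differentiable ℂ a)
    (hbd : ∀ N j : ℕ, ∃ C : ℝ, ∀ l μ : ℝ, |μ| ≤ (N : ℝ) →
      ‖iteratedDeriv j a ((l : ℂ) + (μ : ℂ) * Complex.I)‖ ≤ C * (1 + |l|) ^ (m - (j : ℝ)))
    (k : ℕ) (hk : m + 1 < (k : ℝ)) :
    (∀ μ x : ℝ,
      (∫ l : ℝ, Complex.exp (Complex.I * (x : ℂ) * (l : ℂ)) * iteratedDeriv k a (l : ℂ)) =
        (Real.exp (-(x * μ)) : ℂ) *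
          ∫ l : ℝ, Complex.exp (Complex.I * (x : ℂ) * (l : ℂ)) *
            iteratedDeriv k a ((l : ℂ) + (μ : ℂ) * Complex.I)) ∧
    (∀ μ : ℝ, 0 ≤ μ → ∃ C : ℝ, ∀ x : ℝ,
      Real.exp (μ * |x|) *
          ‖∫ l : ℝ, Complex.exp (Complex.I * (x : ℂ) * (l : ℂ)) * iteratedDeriv k a (l : ℂ)‖ ≤
        C) := by
  have hf : Differentiable ℂ (iteratedDeriv k a) :=
    ha.contDiff.differentiable_iteratedDeriv k (WithTop.coe_lt_top _)
  have hshift : ∀ μ x : ℝ, ∫ l : ℝ, cexp (I * x * l) * iteratedDeriv k a l =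
      Real.exp (-(x * μ)) * ∫ l : ℝ, cexp (I * x * l) * iteratedDeriv k a (l + μ * I) := by
    intro μ x
    obtain ⟨C, hC⟩ := hbd ⌈|μ|⌉₊ k
    exact integral_cexp_mul_eq_integral_cexp_mul_add_mul_I hf (by linarith)
      (fun l y hy => hC l y (hy.trans (Nat.le_ceil _))) x
  refine ⟨hshift, fun μ _ => ⟨max (∫ l : ℝ, ‖iteratedDeriv k a (l + μ * I)‖)
    (∫ l : ℝ, ‖iteratedDeriv k a (l + (-μ : ℝ) * I)‖), fun x => ?_⟩⟩
  rcases le_or_gt 0 x with hx | hx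
  · rw [abs_of_nonneg hx, mul_comm μ]
    exact (exp_mul_norm_integral_cexp_mul_le (hshift μ x)).trans (le_max_left _ _)
  · rw [abs_of_neg hx, show μ * -x = x * -μ by ring]
    exact (exp_mul_norm_integral_cexp_mul_le (hshift (-μ) x)).trans (le_max_right _ _)
end

section
/- Let n ≥ 1 and s > n/2 + 1. Let K, K₀ ⊆ ℝⁿ be measurable sets and c > 0 be such that ‖ζ − ξ‖ ≥ c‖ζ‖ whenever ζ ∈ K₀ and ξ ∉ K. Then there is a constant C = C(n, s, c) with the following property: for all measurable f, g : ℝⁿ → ℂ and v₀ ∈ L²(ℝⁿ) with ⟨·⟩^s f ∈ L²(ℝⁿ) and |g(ξ)| ≤ ( 1_K(ξ) ⟨ξ⟩^{−s} + 1_{K^c}(ξ) ⟨ξ⟩^{−(s−1)} ) v₀(ξ) for almost every ξ, the convolution h(ζ) := ∫_{ℝⁿ} f(ζ−ξ) g(ξ) dξ converges absolutely for almost every ζ, and ‖ 1_{K₀} · ⟨·⟩^s · h ‖_{L²} ≤ C ‖⟨·⟩^s f‖_{L²} ‖v₀‖_{L²}. -/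
/-!
For `ζ ∈ K₀` the weight `⟨ζ⟩^s` is moved onto the factors of `f(ζ - ξ) g(ξ)`. If `ξ ∈ K`, then
`⟨ζ⟩^s ≤ 2^s (⟨ζ - ξ⟩^s + ⟨ξ⟩^s)` and the full decay `⟨ξ⟩^{-s}` of `g` absorbs the second term;
if `ξ ∉ K`, the cone condition gives `⟨ζ⟩ ≲ ⟨ζ - ξ⟩`, so the whole weight falls on `f`. In both
cases, with `F = ⟨·⟩^s f`,
`⟨ζ⟩^s |f(ζ - ξ) g(ξ)| ≲ |F(ζ - ξ)| ⟨ξ⟩^{1-s} |v₀(ξ)| + |f(ζ - ξ)| |v₀(ξ)|`.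
Each term is a convolution of an `L¹` function with an `L²` function: `⟨·⟩^{1-s} v₀` and
`f = ⟨·⟩^{-s} F` are integrable by Cauchy–Schwarz, because `⟨·⟩^{1-s} ∈ L²` when `2(s - 1) > n`.
Young's inequality `‖φ ⋆ ψ‖₂ ≤ ‖φ‖₁ ‖ψ‖₂` concludes, and the same bound shows that the
convolution integral converges absolutely almost everywhere.
-/

open MeasureTheory
open scoped ENNReal

noncomputable section

namespace MeasureTheory

section Lintegral

variable {α : Type*} [MeasurableSpace α] {μ : Measure α}

theorem eLpNorm_two_sq {ε : Type*} [ENorm ε] (f : α → ε) :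
    eLpNorm f 2 μ ^ 2 = ∫⁻ x, ‖f x‖ₑ ^ 2 ∂μ := by
  simpa using eLpNorm_nnreal_pow_eq_lintegral (f := f) (μ := μ) (p := 2) two_ne_zero

theorem ae_lt_top_of_eLpNorm_two_ne_top {φ : α → ℝ≥0∞} (hφ : AEMeasurable φ μ)
    (h : eLpNorm φ 2 μ ≠ ∞) : ∀ᵐ x ∂μ, φ x < ∞ := by
  have hsq : ∫⁻ x, φ x ^ 2 ∂μ ≠ ∞ := by
    simpa [eLpNorm_two_sq] using ENNReal.pow_ne_top (n := 2) h
  filter_upwards [ae_lt_top' (hφ.pow_const 2) hsq] with x hx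
  simpa using hx

/-- Cauchy–Schwarz for `√φ` and `√φ χ`. -/
theorem sq_lintegral_mul_le {φ χ : α → ℝ≥0∞} (hφ : AEMeasurable φ μ) (hχ : AEMeasurable χ μ) :
    (∫⁻ x, φ x * χ x ∂μ) ^ 2 ≤ (∫⁻ x, φ x ∂μ) * ∫⁻ x, φ x * χ x ^ 2 ∂μ := by
  have hsqrt (y : ℝ≥0∞) : (y ^ (2⁻¹ : ℝ)) ^ 2 = y := by
    simpa using ENNReal.rpow_inv_natCast_pow two_ne_zero y
  set r : α → ℝ≥0∞ := fun x => φ x ^ (2⁻¹ : ℝ)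
  have hr (x : α) : r x ^ 2 = φ x := hsqrt (φ x)
  have hsplit (x : α) : φ x * χ x = r x * (r x * χ x) := by rw [← mul_assoc, ← sq, hr]
  have hrm : AEMeasurable r μ := hφ.pow_const _
  have key := ENNReal.lintegral_mul_le_Lp_mul_Lq μ Real.HolderConjugate.two_two hrm (hrm.mul hχ)
  simp only [Pi.mul_apply, ← hsplit, ENNReal.rpow_two, mul_pow, hr] at key
  calc (∫⁻ x, φ x * χ x ∂μ) ^ 2
      ≤ ((∫⁻ x, φ x ∂μ) ^ (1 / 2 : ℝ) * (∫⁻ x, φ x * χ x ^ 2 ∂μ) ^ (1 / 2 : ℝ)) ^ 2 := by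
        gcongr
    _ = (∫⁻ x, φ x ∂μ) * ∫⁻ x, φ x * χ x ^ 2 ∂μ := by rw [mul_pow, one_div, hsqrt, hsqrt]

end Lintegral

section Young

variable {G : Type*} [MeasurableSpace G] [AddGroup G] [MeasurableAdd₂ G] [MeasurableNeg G]
  {μ : Measure G} [SFinite μ] [μ.IsAddLeftInvariant]

theorem eLpNorm_lconvolution_le {φ ψ : G → ℝ≥0∞} (hφ : AEMeasurable φ μ)
    (hψ : AEMeasurable ψ μ) :
    eLpNorm (φ ⋆ₗ[μ] ψ) 2 μ ≤ (∫⁻ x, φ x ∂μ) * eLpNorm ψ 2 μ := by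
  rw [← ENNReal.pow_le_pow_left_iff two_ne_zero, mul_pow, eLpNorm_two_sq, eLpNorm_two_sq]
  simp only [enorm_eq_self, lconvolution_def]
  calc ∫⁻ x, (∫⁻ y, φ y * ψ (-y + x) ∂μ) ^ 2 ∂μ
      ≤ ∫⁻ x, (∫⁻ y, φ y ∂μ) * ∫⁻ y, φ y * ψ (-y + x) ^ 2 ∂μ ∂μ :=
        lintegral_mono fun x => sq_lintegral_mul_le hφ (by fun_prop)
    _ = (∫⁻ y, φ y ∂μ) * ∫⁻ y, ∫⁻ x, φ y * ψ (-y + x) ^ 2 ∂μ ∂μ := by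
        rw [lintegral_const_mul'' _ (by fun_prop), lintegral_lintegral_swap (by fun_prop)]
    _ = (∫⁻ y, φ y ∂μ) * ∫⁻ y, φ y * ∫⁻ x, ψ x ^ 2 ∂μ ∂μ := by
        congr 1
        refine lintegral_congr fun y => ?_
        rw [lintegral_add_left_eq_self (fun x => φ y * ψ x ^ 2),
          lintegral_const_mul'' _ (by fun_prop)]
    _ = (∫⁻ y, φ y ∂μ) ^ 2 * ∫⁻ x, ψ x ^ 2 ∂μ := by
        rw [lintegral_mul_const'' _ hφ, sq, mul_assoc]

theorem eLpNorm_lconvolution_enorm_le {E F : Type*} [NormedAddCommGroup E]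
    [NormedAddCommGroup F] {a : G → E} {b : G → F} (ha : AEStronglyMeasurable a μ)
    (hb : AEStronglyMeasurable b μ) :
    eLpNorm ((‖a ·‖ₑ) ⋆ₗ[μ] (‖b ·‖ₑ)) 2 μ ≤ eLpNorm a 1 μ * eLpNorm b 2 μ := by
  rw [eLpNorm_one_eq_lintegral_enorm, ← eLpNorm_enorm b]
  exact eLpNorm_lconvolution_le ha.enorm hb.enorm

theorem eLpNorm_lconvolution_enorm_mul_le {E : Type*} [NormedAddCommGroup E] {u v : G → ℝ}
    {F : G → E} (hu : AEStronglyMeasurable u μ) (hv : AEStronglyMeasurable v μ)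
    (hF : AEStronglyMeasurable F μ) :
    eLpNorm ((fun x => ‖u x * v x‖ₑ) ⋆ₗ[μ] (‖F ·‖ₑ)) 2 μ ≤
      eLpNorm u 2 μ * eLpNorm v 2 μ * eLpNorm F 2 μ :=
  (eLpNorm_lconvolution_enorm_le (hu.mul hv) hF).trans
    (mul_le_mul_left (eLpNorm_smul_le_mul_eLpNorm (p := 2) (q := 2) hv hu) _)

end Young

end MeasureTheory

section JapaneseBracket

variable {n : ℕ}

theorem jb_sq (x : Euc n) : jb x ^ 2 = 1 + ‖x‖ ^ 2 := Real.sq_sqrt (by positivity)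

theorem one_le_jb (x : Euc n) : 1 ≤ jb x :=
  Real.one_le_sqrt.2 (by nlinarith [norm_nonneg x])

theorem jb_pos (x : Euc n) : 0 < jb x := one_pos.trans_le (one_le_jb x)

theorem norm_le_jb (x : Euc n) : ‖x‖ ≤ jb x :=
  Real.le_sqrt_of_sq_le (by linarith)

theorem continuous_jb : Continuous (jb : Euc n → ℝ) := by
  unfold jb
  fun_prop

theorem measurable_jb_rpow (t : ℝ) : Measurable fun x : Euc n => jb x ^ t :=
  (continuous_jb.rpow_const fun x => Or.inl (jb_pos x).ne').measurable

theorem jb_le_mul_jb_of_norm_le {a : ℝ} {x y : Euc n} (ha : 1 ≤ a) (h : ‖x‖ ≤ a * ‖y‖) :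
    jb x ≤ a * jb y := by
  refine Real.sqrt_le_iff.2 ⟨by nlinarith [jb_pos y], ?_⟩
  nlinarith [jb_sq y, mul_self_le_mul_self (norm_nonneg x) h,
    one_le_mul_of_one_le_of_one_le ha ha, sq_nonneg ‖y‖]

theorem jb_add_le (x y : Euc n) : jb (x + y) ≤ jb x + ‖y‖ := by
  refine Real.sqrt_le_iff.2 ⟨by positivity [(jb_pos x).le], ?_⟩
  nlinarith [jb_sq x, norm_add_le x y, norm_nonneg (x + y), norm_nonneg y, norm_le_jb x]

theorem jb_add_rpow_le {s : ℝ} (hs : 0 ≤ s) (x y : Euc n) :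
    jb (x + y) ^ s ≤ 2 ^ s * (jb x ^ s + jb y ^ s) := by
  have hxy : jb (x + y) ≤ 2 * max (jb x) (jb y) := by
    linarith [jb_add_le x y, norm_le_jb y, le_max_left (jb x) (jb y),
      le_max_right (jb x) (jb y)]
  have hmax : max (jb x) (jb y) ^ s ≤ jb x ^ s + jb y ^ s := by
    rcases max_choice (jb x) (jb y) with h | h <;> rw [h] <;>
      linarith [Real.rpow_nonneg (jb_pos x).le s, Real.rpow_nonneg (jb_pos y).le s]
  calc jb (x + y) ^ s ≤ (2 * max (jb x) (jb y)) ^ s :=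
        Real.rpow_le_rpow (jb_pos _).le hxy hs
    _ = 2 ^ s * max (jb x) (jb y) ^ s :=
        Real.mul_rpow zero_le_two ((jb_pos x).le.trans (le_max_left _ _))
    _ ≤ 2 ^ s * (jb x ^ s + jb y ^ s) := by gcongr

theorem memLp_two_jb_rpow_neg {t : ℝ} (ht : n < 2 * t) :
    MemLp (fun ξ : Euc n => jb ξ ^ (-t)) 2 volume := by
  refine (memLp_two_iff_integrable_sq (measurable_jb_rpow _).aestronglyMeasurable).2 ?_
  have hint := integrable_rpow_neg_one_add_norm_sq (E := Euc n) (μ := volume) (r := 2 * t)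
    (by rwa [finrank_euclideanSpace_fin])
  refine hint.congr (Filter.Eventually.of_forall fun ξ => ?_)
  simp only
  rw [← jb_sq, ← Real.rpow_natCast, ← Real.rpow_mul (jb_pos ξ).le,
    ← Real.rpow_natCast (jb ξ ^ (-t)), ← Real.rpow_mul (jb_pos ξ).le]
  ring_nf

theorem eLpNorm_jb_rpow_ne_zero (t : ℝ) {p : ℝ≥0∞} (hp : p ≠ 0) :
    eLpNorm (fun ξ : Euc n => jb ξ ^ t) p volume ≠ 0 := by
  rw [Ne, eLpNorm_eq_zero_iff (measurable_jb_rpow t).aestronglyMeasurable hp]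
  intro h
  obtain ⟨ξ, hξ⟩ := h.exists
  exact (Real.rpow_pos_of_pos (jb_pos ξ) t).ne' hξ

theorem eLpNorm_one_le_mul_eLpNorm_jb_rpow_smul {s : ℝ} {f : Euc n → ℂ}
    (hf : AEStronglyMeasurable f volume) :
    eLpNorm f 1 volume ≤ eLpNorm (fun ξ : Euc n => jb ξ ^ (-(s - 1))) 2 volume *
      eLpNorm (fun ξ => jb ξ ^ s • f ξ) 2 volume := by
  refine (eLpNorm_mono fun ξ => ?_).trans (eLpNorm_smul_le_mul_eLpNorm
    ((measurable_jb_rpow s).aestronglyMeasurable.smul hf)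
    (measurable_jb_rpow _).aestronglyMeasurable)
  have hξ : jb ξ ^ (-(s - 1)) * jb ξ ^ s = jb ξ := by
    rw [← Real.rpow_add (jb_pos ξ)]
    ring_nf
    exact Real.rpow_one _
  change ‖f ξ‖ ≤ ‖jb ξ ^ (-(s - 1)) • jb ξ ^ s • f ξ‖
  rw [smul_smul, hξ, norm_smul, Real.norm_of_nonneg (jb_pos ξ).le]
  exact le_mul_of_one_le_left (norm_nonneg _) (one_le_jb ξ)

theorem eLpNorm_lconvolution_enorm_le_jb_rpow {s : ℝ} {f : Euc n → ℂ} {v : Euc n → ℝ}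
    (hf : AEStronglyMeasurable f volume) (hv : AEStronglyMeasurable v volume) :
    eLpNorm ((‖v ·‖ₑ) ⋆ₗ (‖f ·‖ₑ)) 2 volume ≤
      eLpNorm (fun ξ : Euc n => jb ξ ^ (-(s - 1))) 2 volume * eLpNorm v 2 volume *
        eLpNorm (fun ξ => jb ξ ^ s • f ξ) 2 volume := by
  rw [lconvolution_comm, mul_right_comm]
  exact (eLpNorm_lconvolution_enorm_le hf hv).trans
    (mul_le_mul_left (eLpNorm_one_le_mul_eLpNorm_jb_rpow_smul hf) _)

end JapaneseBracket

section MicrolocalWeight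

variable {n : ℕ}

/-- `|g| ≤ microlocalWeight K s * v₀` with `v₀ ∈ L²` says that `g` is the Fourier transform of a
function in `H^{s-1}` that is microlocally `H^s` on `K`. -/
def microlocalWeight (K : Set (Euc n)) (s : ℝ) (ξ : Euc n) : ℝ :=
  K.indicator (fun ξ' => jb ξ' ^ (-s)) ξ + Kᶜ.indicator (fun ξ' => jb ξ' ^ (-(s - 1))) ξ

theorem microlocalWeight_nonneg (K : Set (Euc n)) (s : ℝ) (ξ : Euc n) :
    0 ≤ microlocalWeight K s ξ := by
  unfold microlocalWeight
  by_cases hξ : ξ ∈ K <;> simp [hξ, Real.rpow_nonneg (jb_pos ξ).le]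

theorem microlocalWeight_le (K : Set (Euc n)) (s : ℝ) (ξ : Euc n) :
    microlocalWeight K s ξ ≤ jb ξ ^ (-(s - 1)) := by
  unfold microlocalWeight
  by_cases hξ : ξ ∈ K
  · simpa [hξ] using Real.rpow_le_rpow_of_exponent_le (one_le_jb ξ) (by linarith : -s ≤ -(s - 1))
  · simp [hξ]

theorem jb_rpow_mul_jb_rpow_neg_le {s : ℝ} (hs : 0 ≤ s) (ζ ξ : Euc n) :
    jb ζ ^ s * jb ξ ^ (-s) ≤ 2 ^ s * (jb (ζ - ξ) ^ s * jb ξ ^ (-(s - 1)) + 1) := by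
  have hsplit := jb_add_rpow_le hs (ζ - ξ) ξ
  rw [sub_add_cancel] at hsplit
  have hinv : jb ξ ^ s * jb ξ ^ (-s) = 1 := by
    rw [← Real.rpow_add (jb_pos ξ), add_neg_cancel, Real.rpow_zero]
  have hdecay : jb ξ ^ (-s) ≤ jb ξ ^ (-(s - 1)) :=
    Real.rpow_le_rpow_of_exponent_le (one_le_jb ξ) (by linarith)
  have hd : 0 ≤ jb ξ ^ (-s) := Real.rpow_nonneg (jb_pos ξ).le _
  have hζξ : 0 ≤ jb (ζ - ξ) ^ s := Real.rpow_nonneg (jb_pos _).le _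
  calc jb ζ ^ s * jb ξ ^ (-s) ≤ 2 ^ s * (jb (ζ - ξ) ^ s + jb ξ ^ s) * jb ξ ^ (-s) := by gcongr
    _ = 2 ^ s * (jb (ζ - ξ) ^ s * jb ξ ^ (-s) + 1) := by rw [← hinv]; ring
    _ ≤ 2 ^ s * (jb (ζ - ξ) ^ s * jb ξ ^ (-(s - 1)) + 1) := by gcongr

theorem jb_rpow_le_of_cone {s c : ℝ} (hs : 0 ≤ s) (hc : 0 < c) {ζ ξ : Euc n}
    (hcone : c * ‖ζ‖ ≤ ‖ζ - ξ‖) : jb ζ ^ s ≤ max 1 c⁻¹ ^ s * jb (ζ - ξ) ^ s := by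
  have hm : 1 ≤ max 1 c⁻¹ := le_max_left _ _
  have hnorm : ‖ζ‖ ≤ max 1 c⁻¹ * ‖ζ - ξ‖ := by
    have := (le_inv_mul_iff₀ hc).2 hcone
    nlinarith [le_max_right 1 c⁻¹, norm_nonneg (ζ - ξ)]
  rw [← Real.mul_rpow (by linarith) (jb_pos _).le]
  exact Real.rpow_le_rpow (jb_pos _).le (jb_le_mul_jb_of_norm_le hm hnorm) hs

theorem jb_rpow_mul_microlocalWeight_le {K : Set (Euc n)} {s c : ℝ} (hs : 0 ≤ s) (hc : 0 < c)
    {ζ ξ : Euc n} (hcone : ξ ∉ K → c * ‖ζ‖ ≤ ‖ζ - ξ‖) :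
    jb ζ ^ s * microlocalWeight K s ξ ≤
      (2 * max 1 c⁻¹) ^ s * (jb (ζ - ξ) ^ s * jb ξ ^ (-(s - 1)) + 1) := by
  have h2 : 1 ≤ (2 : ℝ) ^ s := Real.one_le_rpow one_le_two hs
  have hm : 1 ≤ max 1 c⁻¹ ^ s := Real.one_le_rpow (le_max_left _ _) hs
  have hP : 0 ≤ jb (ζ - ξ) ^ s * jb ξ ^ (-(s - 1)) :=
    mul_nonneg (Real.rpow_nonneg (jb_pos _).le _) (Real.rpow_nonneg (jb_pos _).le _)
  rw [Real.mul_rpow zero_le_two (zero_le_one.trans (le_max_left _ _))]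
  unfold microlocalWeight
  by_cases hξ : ξ ∈ K
  · simp only [Set.indicator_of_mem hξ, Set.indicator_of_notMem (Set.notMem_compl_iff.2 hξ),
      add_zero]
    nlinarith [jb_rpow_mul_jb_rpow_neg_le hs ζ ξ,
      mul_nonneg (sub_nonneg.2 hm) (mul_nonneg (zero_le_one.trans h2) (add_nonneg hP zero_le_one))]
  · simp only [Set.indicator_of_notMem hξ, Set.indicator_of_mem (Set.mem_compl hξ), zero_add]
    have hw : 0 ≤ jb ξ ^ (-(s - 1)) := Real.rpow_nonneg (jb_pos _).le _
    nlinarith [mul_le_mul_of_nonneg_right (jb_rpow_le_of_cone hs hc (hcone hξ)) hw,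
      mul_nonneg (sub_nonneg.2 h2) (mul_nonneg (zero_le_one.trans hm) hP),
      mul_nonneg (zero_le_one.trans h2) (zero_le_one.trans hm)]

theorem enorm_mul_le_of_le_microlocalWeight {K : Set (Euc n)} {s : ℝ} (hs : 0 ≤ s) {ξ : Euc n}
    (x : Euc n) {a b : ℂ} {v : ℝ} (hb : ‖b‖ ≤ microlocalWeight K s ξ * v) :
    ‖a * b‖ₑ ≤ ‖jb ξ ^ (-(s - 1)) * v‖ₑ * ‖jb x ^ s • a‖ₑ := by
  have hv : ‖b‖ ≤ jb ξ ^ (-(s - 1)) * |v| :=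
    hb.trans <| (mul_le_mul_of_nonneg_left (le_abs_self v) (microlocalWeight_nonneg K s ξ)).trans
      (mul_le_mul_of_nonneg_right (microlocalWeight_le K s ξ) (abs_nonneg v))
  rw [← ofReal_norm, ← ofReal_norm, ← ofReal_norm, ← ENNReal.ofReal_mul (norm_nonneg _)]
  refine ENNReal.ofReal_le_ofReal ?_
  simp only [norm_mul, norm_smul, Real.norm_eq_abs,
    abs_of_nonneg (Real.rpow_nonneg (jb_pos _).le _)]
  have hjb : 1 ≤ jb x ^ s := Real.one_le_rpow (one_le_jb x) hs
  calc ‖a‖ * ‖b‖ ≤ ‖a‖ * (jb ξ ^ (-(s - 1)) * |v|) := by gcongr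
    _ ≤ jb ξ ^ (-(s - 1)) * |v| * (jb x ^ s * ‖a‖) := by
        nlinarith [mul_nonneg (norm_nonneg a)
          (mul_nonneg (Real.rpow_nonneg (jb_pos ξ).le (-(s - 1))) (abs_nonneg v))]

theorem enorm_jb_rpow_smul_mul_le {K : Set (Euc n)} {s c : ℝ} (hs : 0 ≤ s) (hc : 0 < c)
    {ζ ξ : Euc n} (hcone : ξ ∉ K → c * ‖ζ‖ ≤ ‖ζ - ξ‖) {a b : ℂ} {v : ℝ}
    (hb : ‖b‖ ≤ microlocalWeight K s ξ * v) :
    ‖jb ζ ^ s • (a * b)‖ₑ ≤ ENNReal.ofReal ((2 * max 1 c⁻¹) ^ s) *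
      (‖jb ξ ^ (-(s - 1)) * v‖ₑ * ‖jb (ζ - ξ) ^ s • a‖ₑ + ‖v‖ₑ * ‖a‖ₑ) := by
  have hb' : ‖b‖ ≤ microlocalWeight K s ξ * |v| :=
    hb.trans (mul_le_mul_of_nonneg_left (le_abs_self v) (microlocalWeight_nonneg K s ξ))
  have hreal : jb ζ ^ s * (‖a‖ * ‖b‖) ≤ (2 * max 1 c⁻¹) ^ s *
      (‖jb ξ ^ (-(s - 1)) * v‖ * ‖jb (ζ - ξ) ^ s • a‖ + ‖v‖ * ‖a‖) :=
    calc jb ζ ^ s * (‖a‖ * ‖b‖) ≤ jb ζ ^ s * (‖a‖ * (microlocalWeight K s ξ * |v|)) := by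
          have := Real.rpow_nonneg (jb_pos ζ).le s
          gcongr
      _ = jb ζ ^ s * microlocalWeight K s ξ * (‖a‖ * |v|) := by ring
      _ ≤ (2 * max 1 c⁻¹) ^ s * (jb (ζ - ξ) ^ s * jb ξ ^ (-(s - 1)) + 1) * (‖a‖ * |v|) :=
          mul_le_mul_of_nonneg_right (jb_rpow_mul_microlocalWeight_le hs hc hcone) (by positivity)
      _ = _ := by
          simp only [norm_mul, norm_smul, Real.norm_eq_abs,
            abs_of_nonneg (Real.rpow_nonneg (jb_pos _).le _)]
          ring
  have hM : 0 ≤ (2 * max 1 c⁻¹) ^ s := Real.rpow_nonneg (by positivity) s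
  rw [← ofReal_norm, norm_smul, norm_mul, Real.norm_of_nonneg (Real.rpow_nonneg (jb_pos _).le _)]
  refine (ENNReal.ofReal_le_ofReal hreal).trans_eq ?_
  rw [ENNReal.ofReal_mul hM, ENNReal.ofReal_add (by positivity) (by positivity),
    ENNReal.ofReal_mul (norm_nonneg _), ENNReal.ofReal_mul (norm_nonneg _)]
  simp only [ofReal_norm]

end MicrolocalWeight

section ProductEstimate

variable {n : ℕ}

theorem enorm_jb_rpow_smul_integral_le {K : Set (Euc n)} {s c : ℝ} (hs : 0 ≤ s) (hc : 0 < c)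
    {ζ : Euc n} (hcone : ∀ ξ ∉ K, c * ‖ζ‖ ≤ ‖ζ - ξ‖) {f g : Euc n → ℂ} {v : Euc n → ℝ}
    (hf : Measurable f) (hv : AEMeasurable v volume)
    (hgb : ∀ᵐ ξ, ‖g ξ‖ ≤ microlocalWeight K s ξ * v ξ) :
    ‖jb ζ ^ s • ∫ ξ, f (ζ - ξ) * g ξ‖ₑ ≤ ENNReal.ofReal ((2 * max 1 c⁻¹) ^ s) *
      (((fun ξ => ‖jb ξ ^ (-(s - 1)) * v ξ‖ₑ) ⋆ₗ (fun ξ => ‖jb ξ ^ s • f ξ‖ₑ)) ζ +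
        ((‖v ·‖ₑ) ⋆ₗ (‖f ·‖ₑ)) ζ) := by
  have hfζ : Measurable fun ξ => f (ζ - ξ) := hf.comp (measurable_const.sub measurable_id)
  have hsnd : AEMeasurable (fun ξ => ‖v ξ‖ₑ * ‖f (ζ - ξ)‖ₑ) volume :=
    hv.enorm.mul hfζ.enorm.aemeasurable
  have hfst : AEMeasurable
      (fun ξ => ‖jb ξ ^ (-(s - 1)) * v ξ‖ₑ * ‖jb (ζ - ξ) ^ s • f (ζ - ξ)‖ₑ) volume :=
    ((measurable_jb_rpow _).aemeasurable.mul hv).enorm.mul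
      (((measurable_jb_rpow s).comp (measurable_const.sub measurable_id)).smul
        hfζ).enorm.aemeasurable
  calc ‖jb ζ ^ s • ∫ ξ, f (ζ - ξ) * g ξ‖ₑ
      ≤ ‖jb ζ ^ s‖ₑ * ∫⁻ ξ, ‖f (ζ - ξ) * g ξ‖ₑ := by
        rw [enorm_smul]
        gcongr
        exact enorm_integral_le_lintegral_enorm _
    _ = ∫⁻ ξ, ‖jb ζ ^ s • (f (ζ - ξ) * g ξ)‖ₑ := by
        simp_rw [enorm_smul]
        exact (lintegral_const_mul' _ _ enorm_ne_top).symm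
    _ ≤ ∫⁻ ξ, ENNReal.ofReal ((2 * max 1 c⁻¹) ^ s) * (‖jb ξ ^ (-(s - 1)) * v ξ‖ₑ *
          ‖jb (ζ - ξ) ^ s • f (ζ - ξ)‖ₑ + ‖v ξ‖ₑ * ‖f (ζ - ξ)‖ₑ) :=
        lintegral_mono_ae (hgb.mono fun ξ hξ => enorm_jb_rpow_smul_mul_le hs hc (hcone ξ) hξ)
    _ = _ := by
        rw [lintegral_const_mul'' _ (by exact hfst.add hsnd), lintegral_add_right' _ hsnd]
        simp only [lconvolution_def, neg_add_eq_sub]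

theorem eLpNorm_indicator_jb_rpow_smul_convolution_le {K K₀ : Set (Euc n)} {s c : ℝ}
    (hs : 0 ≤ s) (hc : 0 < c) (hcone : ∀ ζ ∈ K₀, ∀ ξ ∉ K, c * ‖ζ‖ ≤ ‖ζ - ξ‖) {f g : Euc n → ℂ}
    {v : Euc n → ℝ} (hf : Measurable f) (hv : AEStronglyMeasurable v volume)
    (hgb : ∀ᵐ ξ, ‖g ξ‖ ≤ microlocalWeight K s ξ * v ξ) :
    eLpNorm (K₀.indicator fun ζ => jb ζ ^ s • ∫ ξ, f (ζ - ξ) * g ξ) 2 volume ≤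
      ENNReal.ofReal ((2 * max 1 c⁻¹) ^ s) *
        (2 * (eLpNorm (fun ξ : Euc n => jb ξ ^ (-(s - 1))) 2 volume * eLpNorm v 2 volume *
          eLpNorm (fun ξ => jb ξ ^ s • f ξ) 2 volume)) := by
  have hw := measurable_jb_rpow (n := n) (-(s - 1))
  have hF : Measurable fun ξ => jb ξ ^ s • f ξ := (measurable_jb_rpow s).smul hf
  have hΦ : AEMeasurable
      ((fun ξ => ‖jb ξ ^ (-(s - 1)) * v ξ‖ₑ) ⋆ₗ (fun ξ => ‖jb ξ ^ s • f ξ‖ₑ)) volume :=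
    aemeasurable_lconvolution (hw.aemeasurable.mul hv.aemeasurable).enorm hF.enorm.aemeasurable
  have hΨ : AEMeasurable ((‖v ·‖ₑ) ⋆ₗ (‖f ·‖ₑ)) volume :=
    aemeasurable_lconvolution hv.enorm hf.enorm.aemeasurable
  calc _ ≤ ENNReal.ofReal ((2 * max 1 c⁻¹) ^ s) *
        eLpNorm ((fun ξ => ‖jb ξ ^ (-(s - 1)) * v ξ‖ₑ) ⋆ₗ (fun ξ => ‖jb ξ ^ s • f ξ‖ₑ) +
          (‖v ·‖ₑ) ⋆ₗ (‖f ·‖ₑ)) 2 volume := by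
        refine eLpNorm_le_mul_eLpNorm_of_ae_le_mul'' _ (hΦ.add hΨ).aestronglyMeasurable
          (Filter.Eventually.of_forall fun ζ => ?_)
        rw [enorm_indicator_eq_indicator_enorm]
        exact Set.indicator_apply_le' (fun hζ => enorm_jb_rpow_smul_integral_le hs hc
          (hcone ζ hζ) hf hv.aemeasurable hgb) fun _ => zero_le
    _ ≤ _ := by
        gcongr
        rw [two_mul]
        exact (eLpNorm_add_le hΦ.aestronglyMeasurable hΨ.aestronglyMeasurable one_le_two).trans
          (add_le_add (eLpNorm_lconvolution_enorm_mul_le hw.aestronglyMeasurable hv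
            hF.aestronglyMeasurable)
            (eLpNorm_lconvolution_enorm_le_jb_rpow (s := s) hf.aestronglyMeasurable hv))

theorem integrable_convolution_of_lconvolution_lt_top {K : Set (Euc n)} {s : ℝ} (hs : 0 ≤ s)
    {f g : Euc n → ℂ} {v : Euc n → ℝ} (hf : Measurable f) (hg : Measurable g)
    (hgb : ∀ᵐ ξ, ‖g ξ‖ ≤ microlocalWeight K s ξ * v ξ) {ζ : Euc n}
    (hζ : ((fun ξ => ‖jb ξ ^ (-(s - 1)) * v ξ‖ₑ) ⋆ₗ (fun ξ => ‖jb ξ ^ s • f ξ‖ₑ)) ζ < ∞) :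
    Integrable (fun ξ => f (ζ - ξ) * g ξ) := by
  refine ⟨((hf.comp (measurable_const.sub measurable_id)).mul hg).aestronglyMeasurable,
    lt_of_le_of_lt (lintegral_mono_ae (hgb.mono fun ξ hξ => ?_)) hζ⟩
  rw [neg_add_eq_sub]
  exact enorm_mul_le_of_le_microlocalWeight hs (ζ - ξ) hξ

theorem ae_integrable_convolution {K : Set (Euc n)} {s : ℝ} (hs : 0 ≤ s) (hsn : n < 2 * (s - 1))
    {f g : Euc n → ℂ} {v : Euc n → ℝ} (hf : Measurable f) (hg : Measurable g)
    (hv : MemLp v 2 volume) (hF : MemLp (fun ξ => jb ξ ^ s • f ξ) 2 volume)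
    (hgb : ∀ᵐ ξ, ‖g ξ‖ ≤ microlocalWeight K s ξ * v ξ) :
    ∀ᵐ ζ : Euc n, Integrable (fun ξ => f (ζ - ξ) * g ξ) := by
  have hw := memLp_two_jb_rpow_neg hsn
  have hfin := ae_lt_top_of_eLpNorm_two_ne_top
    (aemeasurable_lconvolution (hw.1.aemeasurable.mul hv.1.aemeasurable).enorm hF.1.enorm)
    (ne_top_of_le_ne_top (by finiteness [hw.2, hv.2, hF.2])
      (eLpNorm_lconvolution_enorm_mul_le hw.1 hv.1 hF.1))
  filter_upwards [hfin] with ζ hζ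
  exact integrable_convolution_of_lconvolution_lt_top hs hf hg hgb hζ

end ProductEstimate

theorem microlocal_product_general (n : ℕ) (s : ℝ) (hs : (n : ℝ) / 2 + 1 < s)
    (c : ℝ) (hc : 0 < c) :
    ∃ C : ℝ, 0 < C ∧
      ∀ K K₀ : Set (Euc n), MeasurableSet K → MeasurableSet K₀ →
        (∀ ζ ∈ K₀, ∀ ξ ∉ K, c * ‖ζ‖ ≤ ‖ζ - ξ‖) →
        ∀ (f g : Euc n → ℂ) (v₀ : Euc n → ℝ),
          Measurable f → Measurable g → MemLp v₀ 2 volume →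
          MemLp (fun ξ => jb ξ ^ s • f ξ) 2 volume →
          (∀ᵐ ξ : Euc n, ‖g ξ‖ ≤
            (K.indicator (fun ξ' => jb ξ' ^ (-s)) ξ +
              Kᶜ.indicator (fun ξ' => jb ξ' ^ (-(s - 1))) ξ) * v₀ ξ) →
          (∀ᵐ ζ : Euc n, Integrable (fun ξ => f (ζ - ξ) * g ξ)) ∧
          eLpNorm (K₀.indicator fun ζ => jb ζ ^ s • ∫ ξ, f (ζ - ξ) * g ξ) 2 volume ≤
            ENNReal.ofReal C * eLpNorm (fun ξ => jb ξ ^ s • f ξ) 2 volume *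
              eLpNorm v₀ 2 volume := by
  have hs0 : 0 ≤ s := by linarith [(Nat.cast_nonneg n : (0 : ℝ) ≤ n)]
  have hsn : (n : ℝ) < 2 * (s - 1) := by linarith
  set L := eLpNorm (fun ξ : Euc n => jb ξ ^ (-(s - 1))) 2 volume
  have hL : L ≠ ∞ := (memLp_two_jb_rpow_neg hsn).2.ne
  have hL0 : 0 < L.toReal := ENNReal.toReal_pos (eLpNorm_jb_rpow_ne_zero _ two_ne_zero) hL
  refine ⟨2 * (2 * max 1 c⁻¹) ^ s * L.toReal, by positivity, ?_⟩
  intro K K₀ _ _ hcone f g v₀ hf hg hv₀ hF hgb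
  refine ⟨ae_integrable_convolution hs0 hsn hf hg hv₀ hF hgb,
    (eLpNorm_indicator_jb_rpow_smul_convolution_le hs0 hc hcone hf hv₀.1 hgb).trans_eq ?_⟩
  rw [ENNReal.ofReal_mul (by positivity), ENNReal.ofReal_mul (by positivity),
    ENNReal.ofReal_toReal hL, ENNReal.ofReal_ofNat]
  ring

/-- **Microlocal product estimate, frequency side** (Lemma 8.8 of the paper).  Let
`s > n/2 + 1` and `c > 0`.  There is `C = C(n,s,c)` such that: for all measurable cones
`K₀, K` with `‖ζ−ξ‖ ≥ c‖ζ‖` whenever `ζ ∈ K₀`, `ξ ∉ K`, all `f` (the Fourier transform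
of `u ∈ H^s`) with `⟨·⟩^s f ∈ L²`, and all `g` (the Fourier transform of
`v ∈ H^{s−1}` with `H^s` regularity microlocally on `K`) with
`|g(ξ)| ≤ (1_K(ξ) ⟨ξ⟩^{−s} + 1_{K^c}(ξ) ⟨ξ⟩^{−(s−1)}) v₀(ξ)`, `v₀ ∈ L²`,
the convolution `h(ζ) = ∫ f(ζ−ξ) g(ξ) dξ` converges absolutely a.e. and
`‖1_{K₀} ⟨·⟩^s h‖_{L²} ≤ C ‖⟨·⟩^s f‖_{L²} ‖v₀‖_{L²}`. -/
theorem microlocal_product (n : ℕ) (hn : 1 ≤ n) (s : ℝ) (hs : (n : ℝ) / 2 + 1 < s)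
    (c : ℝ) (hc : 0 < c) :
    ∃ C : ℝ, 0 < C ∧
      ∀ K K₀ : Set (Euc n), MeasurableSet K → MeasurableSet K₀ →
        (∀ ζ ∈ K₀, ∀ ξ ∉ K, c * ‖ζ‖ ≤ ‖ζ - ξ‖) →
        ∀ (f g : Euc n → ℂ) (v₀ : Euc n → ℝ),
          Measurable f → Measurable g → MemLp v₀ 2 volume →
          MemLp (fun ξ => jb ξ ^ s • f ξ) 2 volume →
          (∀ᵐ ξ : Euc n, ‖g ξ‖ ≤
            (K.indicator (fun ξ' => jb ξ' ^ (-s)) ξ +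
              Kᶜ.indicator (fun ξ' => jb ξ' ^ (-(s - 1))) ξ) * v₀ ξ) →
          (∀ᵐ ζ : Euc n, Integrable (fun ξ => f (ζ - ξ) * g ξ)) ∧
          eLpNorm (K₀.indicator fun ζ => jb ζ ^ s • ∫ ξ, f (ζ - ξ) * g ξ) 2 volume ≤
            ENNReal.ofReal C * eLpNorm (fun ξ => jb ξ ^ s • f ξ) 2 volume *
              eLpNorm v₀ 2 volume :=
  microlocal_product_general n s hs c hc
end
end
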